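/- Let A be a bialgebra over a commutative ring k. The pair of k-module maps φ⁰ = Δ : A → A ⊗ A and φ¹ = (id_A ⊗ η) : A ≅ A ⊗ k → A ⊗ A forms a contractible (split) equalizer with equalizer η : k → A; the contracting maps are ε ⊗ id : A ⊗ A → A and ε : A → k. In particular, the coinvariants of A regarded as a Hopf module over itself, {a ∈ A | Δ(a) = a ⊗ 1}, equal the image of the unit η : k → A. -/

import Mathlib

open TensorProduct

variable (k : Type) [CommRing k] (A : Type) [Ring A] [Bialgebra k A]

/-- The contracting map `ε ⊗ id : A ⊗ A → A`, `a ⊗ b ↦ ε(a) • b`. -/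
noncomputable def contractU : TensorProduct k A A →ₗ[k] A :=
  TensorProduct.lift ((LinearMap.lsmul k A) ∘ₗ (Coalgebra.counit (R := k) (A := A)))

@[simp]
lemma contractU_tmul (a b : A) :
    contractU k A (a ⊗ₜ[k] b) = Coalgebra.counit (R := k) a • b :=
  rfl

lemma contractU_comul (a : A) : contractU k A (Coalgebra.comul a) = a :=
  LinearMap.congr_fun Coalgebra.lift_lsmul_comp_counit_comp_comul a

lemma contractU_tmul_one (a : A) :
    contractU k A (a ⊗ₜ[k] (1 : A)) = algebraMap k A (Coalgebra.counit a) := by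
  rw [contractU_tmul, Algebra.algebraMap_eq_smul_one]

variable {k A} in
lemma Bialgebra.comul_algebraMap_eq_tmul_one (x : k) :
    Coalgebra.comul (R := k) (algebraMap k A x) = algebraMap k A x ⊗ₜ[k] (1 : A) := by
  rw [Bialgebra.comul_algebraMap, Algebra.TensorProduct.algebraMap_apply]

lemma setOf_comul_eq_tmul_one_eq_range_algebraMap :
    {a : A | Coalgebra.comul (R := k) a = a ⊗ₜ[k] (1 : A)} = Set.range (algebraMap k A) := by
  ext a
  constructor
  · intro ha
    exact ⟨Coalgebra.counit a, by rw [← contractU_tmul_one, ← ha, contractU_comul]⟩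
  · rintro ⟨x, rfl⟩
    exact Bialgebra.comul_algebraMap_eq_tmul_one x

/-- For a bialgebra `A` over `k`, the pair `φ⁰ = Δ` and `φ¹ = (id ⊗ η) : a ↦ a ⊗ 1`
forms a split (contractible) equalizer with equalizer the unit `η : k → A` and
contracting maps `ε ⊗ id : A ⊗ A → A` and `ε : A → k`.  In particular the Hopf
module coinvariants `{a | Δ a = a ⊗ 1}` of `A` equal the image of the unit. -/
theorem stmt14 :
    (∀ x : k, Coalgebra.counit (R := k) (algebraMap k A x) = x) ∧
    (∀ x : k, Coalgebra.comul (R := k) (algebraMap k A x) =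
      (algebraMap k A x) ⊗ₜ[k] (1 : A)) ∧
    (∀ a : A, contractU k A (Coalgebra.comul a) = a) ∧
    (∀ a : A, contractU k A (a ⊗ₜ[k] (1 : A)) =
      algebraMap k A (Coalgebra.counit a)) ∧
    {a : A | Coalgebra.comul (R := k) a = a ⊗ₜ[k] (1 : A)} =
      Set.range (algebraMap k A) :=
  ⟨Bialgebra.counit_algebraMap, Bialgebra.comul_algebraMap_eq_tmul_one,
    contractU_comul k A, contractU_tmul_one k A, setOf_comul_eq_tmul_one_eq_range_algebraMap k A⟩
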